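/- arXiv:1811.12812 — 2 statements merged into one kernel-verified Lean document; each statement's English description precedes it below -/
import Mathlib

section
/- Let μ > 0, λ ∈ ℝ with 2μ + λ ≠ 0 and μ + λ arbitrary. Define D = −μΔ − (μ+λ)grad∘div acting on ℂ³-valued functions on ℝ³ (as Fourier multipliers). Then the operator D⁻¹ψ = −Δ⁻¹( (1/μ)ψ + (1/(2μ+λ) − 1/μ)Δ⁻¹ grad(div ψ) ) satisfies D⁻¹D = DD⁻¹ = Id on the appropriate weighted L² Fourier spaces. -/
/-! With `P = |k|⁻² k kᵀ`, the projection onto the longitudinal (gradient) direction, the symbol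
of `D` is `μ|k|² (1 - P) + (2μ + λ)|k|² P` and that of `D⁻¹` has the reciprocal coefficients on the
same two parts; as `P` and `1 - P` are complementary idempotents, both products are the identity. -/

open Matrix

lemma IsIdempotentElem.smul_one_sub_add_smul_mul_inv {𝕜 A : Type*} [Field 𝕜] [Ring A]
    [Algebra 𝕜 A] {P : A} (hP : IsIdempotentElem P) {a b : 𝕜} (ha : a ≠ 0) (hb : b ≠ 0) :
    (a • (1 - P) + b • P) * (a⁻¹ • (1 - P) + b⁻¹ • P) = 1 := by
  simp only [add_mul, mul_add, smul_mul_smul_comm, hP.one_sub.eq, hP.eq, hP.mul_one_sub_self,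
    hP.one_sub_mul_self, smul_zero, add_zero, zero_add, mul_inv_cancel₀ ha, mul_inv_cancel₀ hb,
    one_smul, sub_add_cancel]

lemma Matrix.isIdempotentElem_inv_dotProduct_smul_vecMulVec {n 𝕜 : Type*} [Fintype n]
    [DecidableEq n] [Field 𝕜] {v : n → 𝕜} (hv : v ⬝ᵥ v ≠ 0) :
    IsIdempotentElem ((v ⬝ᵥ v)⁻¹ • vecMulVec v v) := by
  rw [IsIdempotentElem, smul_mul_smul_comm, vecMulVec_mul_vecMulVec, vecMulVec_smul, smul_smul,
    mul_assoc, inv_mul_cancel₀ hv, mul_one]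

lemma EuclideanSpace.real_norm_sq_eq_dotProduct {n : Type*} [Fintype n] (x : EuclideanSpace ℝ n) :
    ‖x‖ ^ 2 = ⇑x ⬝ᵥ ⇑x := by
  simp only [EuclideanSpace.real_norm_sq_eq, dotProduct, ← sq]

/-- as Fourier multiplier operators, D = −μΔ − (μ+λ)grad∘div has the
inverse D⁻¹ψ = −Δ⁻¹((1/μ)ψ + (1/(2μ+λ) − 1/μ)Δ⁻¹ grad(div ψ)): pointwise in Fourier
space (for k ≠ 0) the corresponding multiplier matrices compose to the identity,
so D⁻¹D = DD⁻¹ = Id on the weighted L² Fourier spaces. -/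
theorem stmt_6 (μ l : ℝ) (hμ : 0 < μ) (h2 : 2 * μ + l ≠ 0) :
    ∀ k : EuclideanSpace ℝ (Fin 3), k ≠ 0 →
    let K : Matrix (Fin 3) (Fin 3) ℝ := Matrix.of fun i j => k i * k j
    -- Fourier symbol of D = −μΔ − (μ+λ) grad div
    let M : Matrix (Fin 3) (Fin 3) ℝ :=
      (μ * ‖k‖ ^ 2) • (1 : Matrix (Fin 3) (Fin 3) ℝ) + (μ + l) • K
    -- Fourier symbol of D⁻¹ = −Δ⁻¹((1/μ)·Id + (1/(2μ+λ) − 1/μ)·Δ⁻¹ grad div)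
    let N : Matrix (Fin 3) (Fin 3) ℝ :=
      (‖k‖ ^ 2)⁻¹ • ((1 / μ) • (1 : Matrix (Fin 3) (Fin 3) ℝ)
        + (1 / (2 * μ + l) - 1 / μ) • (‖k‖ ^ 2)⁻¹ • K)
    N * M = 1 ∧ M * N = 1 := by
  intro k hk K M N
  set s := ‖k‖ ^ 2 with hs
  have hs0 : s ≠ 0 := pow_ne_zero _ (norm_ne_zero_iff.mpr hk)
  have hP : IsIdempotentElem (s⁻¹ • K) := by
    rw [hs, EuclideanSpace.real_norm_sq_eq_dotProduct] at hs0 ⊢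
    exact isIdempotentElem_inv_dotProduct_smul_vecMulVec hs0
  have hK : K = s • s⁻¹ • K := by rw [smul_smul, mul_inv_cancel₀ hs0, one_smul]
  have hM : M = (μ * s) • (1 - s⁻¹ • K) + ((2 * μ + l) * s) • (s⁻¹ • K) := by
    simp only [M]
    nth_rw 1 [hK]
    match_scalars <;> ring
  have hN : N = (μ * s)⁻¹ • (1 - s⁻¹ • K) + ((2 * μ + l) * s)⁻¹ • (s⁻¹ • K) := by
    simp only [N]
    match_scalars <;> field_simp <;> ring
  have ha : μ * s ≠ 0 := mul_ne_zero hμ.ne' hs0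
  have hb : (2 * μ + l) * s ≠ 0 := mul_ne_zero h2 hs0
  refine ⟨?_, ?_⟩
  · rw [hM, hN]
    simpa only [inv_inv] using
      hP.smul_one_sub_add_smul_mul_inv (inv_ne_zero ha) (inv_ne_zero hb)
  · rw [hM, hN]
    exact hP.smul_one_sub_add_smul_mul_inv ha hb
end

section
/- Gradient of the dipole expansion: under the same hypotheses (ρ smooth compactly supported in the ball of radius R, Q = ∫ρ, M₁ = ∫|y||ρ(y)|dy), for |x| ≥ 2R and each i ∈ {1,2,3}, ∂ᵢ[(1/(4π))∫ρ(y)/|x−y|dy] = −(Q/(4π))·xᵢ/|x|³ + eᵢ(x) with |eᵢ(x)| ≤ (8M₁/π)·|x|⁻³. -/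
set_option maxHeartbeats 1000000

open MeasureTheory Real

section aux

variable {F : Type*} [NormedAddCommGroup F] [InnerProductSpace ℝ F]

lemma hasFDerivAt_norm' (z : F) (hz : z ≠ 0) :
    HasFDerivAt (fun w : F => ‖w‖) (‖z‖⁻¹ • innerSL ℝ z) z := by
  have hzn : ‖z‖ ≠ 0 := norm_ne_zero_iff.mpr hz
  have h1 : HasFDerivAt (fun w : F => ‖w‖ ^ 2) ((2 : ℕ) • innerSL ℝ z) z :=
    (hasStrictFDerivAt_norm_sq z).hasFDerivAt
  have h2 : HasDerivAt Real.sqrt (1 / (2 * Real.sqrt (‖z‖ ^ 2))) (‖z‖ ^ 2) :=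
    Real.hasDerivAt_sqrt (pow_ne_zero 2 hzn)
  have h3 := h2.comp_hasFDerivAt z h1
  simp only [Function.comp_def, Real.sqrt_sq (norm_nonneg _)] at h3
  have hcl : (1 / (2 * ‖z‖)) • ((2 : ℕ) • innerSL ℝ z) = ‖z‖⁻¹ • innerSL ℝ z := by
    rw [← Nat.cast_smul_eq_nsmul ℝ, smul_smul]
    congr 1
    push_cast
    field_simp
  rwa [hcl] at h3

lemma hasFDerivAt_inv_norm (z : F) (hz : z ≠ 0) :
    HasFDerivAt (fun w : F => ‖w‖⁻¹) ((-(‖z‖ ^ 3)⁻¹) • innerSL ℝ z) z := by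
  have hzn : ‖z‖ ≠ 0 := norm_ne_zero_iff.mpr hz
  have h2 : HasDerivAt (fun t : ℝ => t⁻¹) (-(‖z‖ ^ 2)⁻¹) ‖z‖ := hasDerivAt_inv hzn
  have h3 := h2.comp_hasFDerivAt z (hasFDerivAt_norm' z hz)
  simp only [Function.comp_def] at h3
  have hcl : (-(‖z‖ ^ 2)⁻¹) • (‖z‖⁻¹ • innerSL ℝ z) = (-(‖z‖ ^ 3)⁻¹) • innerSL ℝ z := by
    rw [smul_smul]
    congr 1
    field_simp
  rwa [hcl] at h3

lemma hasFDerivAt_inv_norm_cube (z : F) (hz : z ≠ 0) :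
    HasFDerivAt (fun w : F => (‖w‖ ^ 3)⁻¹) ((-3 * (‖z‖ ^ 5)⁻¹) • innerSL ℝ z) z := by
  have hzn : ‖z‖ ≠ 0 := norm_ne_zero_iff.mpr hz
  have h2 : HasDerivAt (fun t : ℝ => (t ^ 3)⁻¹)
      (-(3 * ‖z‖ ^ 2) / (‖z‖ ^ 3) ^ 2) ‖z‖ := by
    have := (hasDerivAt_pow 3 ‖z‖).inv (pow_ne_zero 3 hzn)
    exact this
  have h3 := h2.comp_hasFDerivAt z (hasFDerivAt_norm' z hz)
  simp only [Function.comp_def] at h3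
  have hcl : (-(3 * ‖z‖ ^ 2) / (‖z‖ ^ 3) ^ 2) • (‖z‖⁻¹ • innerSL ℝ z)
      = (-3 * (‖z‖ ^ 5)⁻¹) • innerSL ℝ z := by
    rw [smul_smul]
    congr 1
    field_simp
  rwa [hcl] at h3

lemma hasFDerivAt_kernel (y z : F) (h : z ≠ y) :
    HasFDerivAt (fun w : F => ‖w - y‖⁻¹) ((-(‖z - y‖ ^ 3)⁻¹) • innerSL ℝ (z - y)) z := by
  have hsub : HasFDerivAt (fun w : F => w - y) (ContinuousLinearMap.id ℝ F) z :=
    (hasFDerivAt_id z).sub_const y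
  have := (hasFDerivAt_inv_norm (z - y) (sub_ne_zero.mpr h)).comp z hsub
  rw [ContinuousLinearMap.comp_id] at this
  exact this

end aux

section euc

local notation "E3" => EuclideanSpace ℝ (Fin 3)

lemma coord_abs_le_norm (w : E3) (i : Fin 3) : |w i| ≤ ‖w‖ := by
  rw [EuclideanSpace.norm_eq]
  have h1 : |w i| = Real.sqrt (‖w i‖ ^ 2) := by
    rw [Real.sqrt_sq_eq_abs]; simp
  rw [h1]
  apply Real.sqrt_le_sqrt
  exact Finset.single_le_sum (f := fun j => ‖w j‖ ^ 2) (fun j _ => by positivity)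
    (Finset.mem_univ i)

lemma hasFDerivAt_g (i : Fin 3) (z : E3) (hz : z ≠ 0) :
    HasFDerivAt (fun w : E3 => w i * (‖w‖ ^ 3)⁻¹)
      ((z i) • ((-3 * (‖z‖ ^ 5)⁻¹) • innerSL ℝ z)
        + (‖z‖ ^ 3)⁻¹ • (EuclideanSpace.proj i : E3 →L[ℝ] ℝ)) z := by
  have hc : HasFDerivAt (fun w : E3 => w i) (EuclideanSpace.proj i : E3 →L[ℝ] ℝ) z :=
    (EuclideanSpace.proj i : E3 →L[ℝ] ℝ).hasFDerivAt
  exact hc.mul (hasFDerivAt_inv_norm_cube z hz)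

lemma norm_g'_le (i : Fin 3) (z : E3) (hz : z ≠ 0) :
    ‖(z i) • ((-3 * (‖z‖ ^ 5)⁻¹) • innerSL ℝ z)
        + (‖z‖ ^ 3)⁻¹ • (EuclideanSpace.proj i : E3 →L[ℝ] ℝ)‖
      ≤ 4 * (‖z‖ ^ 3)⁻¹ := by
  have hzn : (0:ℝ) < ‖z‖ := norm_pos_iff.mpr hz
  apply ContinuousLinearMap.opNorm_le_bound _ (by positivity)
  intro w
  simp only [ContinuousLinearMap.add_apply, ContinuousLinearMap.smul_apply, smul_eq_mul,
    Real.norm_eq_abs]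
  have hip : |(inner ℝ z w : ℝ)| ≤ ‖z‖ * ‖w‖ := abs_real_inner_le_norm z w
  have hzi : |z i| ≤ ‖z‖ := coord_abs_le_norm z i
  have hwi : |(EuclideanSpace.proj i : E3 →L[ℝ] ℝ) w| ≤ ‖w‖ := coord_abs_le_norm w i
  have h5 : (0:ℝ) ≤ (‖z‖ ^ 5)⁻¹ := by positivity
  have h3 : (0:ℝ) ≤ (‖z‖ ^ 3)⁻¹ := by positivity
  have e1 : |(-3 : ℝ) * (‖z‖ ^ 5)⁻¹| = 3 * (‖z‖ ^ 5)⁻¹ := by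
    rw [abs_mul, abs_neg, abs_of_nonneg h5]; norm_num
  have t1 : |z i * (-3 * (‖z‖ ^ 5)⁻¹ * (inner ℝ z w : ℝ))|
      ≤ ‖z‖ * (3 * (‖z‖ ^ 5)⁻¹ * (‖z‖ * ‖w‖)) := by
    rw [abs_mul, abs_mul, e1]
    gcongr
  have t2 : |(‖z‖ ^ 3)⁻¹ * (EuclideanSpace.proj i : E3 →L[ℝ] ℝ) w|
      ≤ (‖z‖ ^ 3)⁻¹ * ‖w‖ := by
    rw [abs_mul, abs_of_nonneg h3]
    gcongr
  calc |z i * (-3 * (‖z‖ ^ 5)⁻¹ * (inner ℝ z w : ℝ))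
        + (‖z‖ ^ 3)⁻¹ * (EuclideanSpace.proj i : E3 →L[ℝ] ℝ) w|
      ≤ |z i * (-3 * (‖z‖ ^ 5)⁻¹ * (inner ℝ z w : ℝ))|
        + |(‖z‖ ^ 3)⁻¹ * (EuclideanSpace.proj i : E3 →L[ℝ] ℝ) w| := abs_add_le _ _
    _ ≤ ‖z‖ * (3 * (‖z‖ ^ 5)⁻¹ * (‖z‖ * ‖w‖)) + (‖z‖ ^ 3)⁻¹ * ‖w‖ := add_le_add t1 t2
    _ = 4 * (‖z‖ ^ 3)⁻¹ * ‖w‖ := by field_simp; ring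

lemma est_main (R : ℝ) (hR : 0 < R) (x y : E3) (hx : 2 * R ≤ ‖x‖) (hy : ‖y‖ ≤ R)
    (i : Fin 3) :
    |x i * (‖x‖ ^ 3)⁻¹ - (x - y) i * (‖x - y‖ ^ 3)⁻¹| ≤ 32 * (‖x‖ ^ 3)⁻¹ * ‖y‖ := by
  have hx0 : (0:ℝ) < ‖x‖ := lt_of_lt_of_le (by linarith) hx
  set s := Metric.closedBall x R with hs
  have hzball : ∀ z ∈ s, ‖x‖ / 2 ≤ ‖z‖ := by
    intro z hz
    rw [Metric.mem_closedBall, dist_eq_norm] at hz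
    have h1 : ‖x‖ - ‖z‖ ≤ ‖x - z‖ := by
      have := norm_sub_norm_le x z
      linarith
    rw [norm_sub_rev] at h1
    have : ‖x‖ - ‖z‖ ≤ R := by
      have := norm_sub_norm_le x z
      linarith
    linarith
  have hzne : ∀ z ∈ s, z ≠ 0 := by
    intro z hz h0
    have := hzball z hz
    rw [h0, norm_zero] at this
    linarith
  have hbound : ∀ z ∈ s,
      ‖(z i) • ((-3 * (‖z‖ ^ 5)⁻¹) • innerSL ℝ z)
        + (‖z‖ ^ 3)⁻¹ • (EuclideanSpace.proj i : E3 →L[ℝ] ℝ)‖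
      ≤ 32 * (‖x‖ ^ 3)⁻¹ := by
    intro z hz
    refine (norm_g'_le i z (hzne z hz)).trans ?_
    have h1 : ‖x‖ / 2 ≤ ‖z‖ := hzball z hz
    have h2 : (‖z‖ ^ 3)⁻¹ ≤ ((‖x‖ / 2) ^ 3)⁻¹ := by
      apply inv_anti₀ (by positivity)
      exact pow_le_pow_left₀ (by positivity) h1 3
    calc 4 * (‖z‖ ^ 3)⁻¹ ≤ 4 * ((‖x‖ / 2) ^ 3)⁻¹ := by linarith
      _ = 32 * (‖x‖ ^ 3)⁻¹ := by
          rw [div_pow, inv_div]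
          field_simp
          norm_num
  have hder : ∀ z ∈ s, HasFDerivWithinAt (fun w : E3 => w i * (‖w‖ ^ 3)⁻¹)
      ((z i) • ((-3 * (‖z‖ ^ 5)⁻¹) • innerSL ℝ z)
        + (‖z‖ ^ 3)⁻¹ • (EuclideanSpace.proj i : E3 →L[ℝ] ℝ)) s z :=
    fun z hz => (hasFDerivAt_g i z (hzne z hz)).hasFDerivWithinAt
  have hxs : x ∈ s := Metric.mem_closedBall_self hR.le
  have hxys : x - y ∈ s := by
    rw [Metric.mem_closedBall, dist_eq_norm]
    simpa using hy
  have := (convex_closedBall x R).norm_image_sub_le_of_norm_hasFDerivWithin_le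
    hder hbound hxys hxs
  have he : x - (x - y) = y := by abel
  rw [he] at this
  calc |x i * (‖x‖ ^ 3)⁻¹ - (x - y) i * (‖x - y‖ ^ 3)⁻¹|
      = ‖(fun w : E3 => w i * (‖w‖ ^ 3)⁻¹) x - (fun w : E3 => w i * (‖w‖ ^ 3)⁻¹) (x - y)‖ := by
        simp [Real.norm_eq_abs]
    _ ≤ 32 * (‖x‖ ^ 3)⁻¹ * ‖y‖ := this

end euc

/-- gradient of the dipole expansion: under the hypotheses of the dipole
expansion lemma, for |x| ≥ 2R and i ∈ {1,2,3},
∂ᵢ[(1/4π)∫ρ(y)/|x−y|dy] = −(Q/4π)xᵢ/|x|³ + eᵢ(x) with |eᵢ(x)| ≤ (8M₁/π)|x|⁻³. -/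
theorem stmt_11 (R : ℝ) (hR : 0 < R) (ρ : EuclideanSpace ℝ (Fin 3) → ℝ)
    (hsmooth : ContDiff ℝ (⊤ : ℕ∞) ρ) (hsupp : HasCompactSupport ρ)
    (hball : Function.support ρ ⊆ Metric.closedBall 0 R)
    (Q M₁ : ℝ) (hQ : Q = ∫ y, ρ y) (hM₁ : M₁ = ∫ y, ‖y‖ * |ρ y|) :
    ∀ x : EuclideanSpace ℝ (Fin 3), 2 * R ≤ ‖x‖ → ∀ i : Fin 3,
      |fderiv ℝ (fun z => (1 / (4 * π)) * ∫ y, ρ y / ‖z - y‖) x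
          (EuclideanSpace.single i 1)
        - (-(Q / (4 * π)) * x i / ‖x‖ ^ 3)|
        ≤ (8 * M₁ / π) * (‖x‖ ^ 3)⁻¹ := by
  intro x hx i
  have hπ : (0:ℝ) < π := Real.pi_pos
  have hx0 : (0:ℝ) < ‖x‖ := lt_of_lt_of_le (by linarith) hx
  have ρc : Continuous ρ := hsmooth.continuous
  have ρint : Integrable ρ := ρc.integrable_of_hasCompactSupport hsupp
  have Mint : Integrable (fun y : EuclideanSpace ℝ (Fin 3) => ‖y‖ * |ρ y|) := by
    have hcs : HasCompactSupport (fun y : EuclideanSpace ℝ (Fin 3) => ‖y‖ * |ρ y|) :=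
      HasCompactSupport.mul_left hsupp.abs
    exact (continuous_norm.mul ρc.abs).integrable_of_hasCompactSupport hcs
  -- support facts
  have hsuppR : ∀ y : EuclideanSpace ℝ (Fin 3), ρ y ≠ 0 → ‖y‖ ≤ R := by
    intro y hy
    have := hball (Function.mem_support.mpr hy)
    rwa [Metric.mem_closedBall, dist_zero_right] at this
  have hfar : ∀ z : EuclideanSpace ℝ (Fin 3), z ∈ Metric.ball x (R / 2) →
      ∀ y : EuclideanSpace ℝ (Fin 3), ‖y‖ ≤ R → R / 2 ≤ ‖z - y‖ := by
    intro z hz y hy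
    rw [Metric.mem_ball, dist_eq_norm] at hz
    have h1 : ‖x - y‖ ≤ ‖x - z‖ + ‖z - y‖ := by
      have : x - y = (x - z) + (z - y) := by abel
      rw [this]; exact norm_add_le _ _
    have h2 : ‖x‖ - ‖y‖ ≤ ‖x - y‖ := norm_sub_norm_le x y
    rw [norm_sub_rev] at hz
    linarith
  set F' : EuclideanSpace ℝ (Fin 3) → EuclideanSpace ℝ (Fin 3) →
      (EuclideanSpace ℝ (Fin 3) →L[ℝ] ℝ) :=
    fun z y => ρ y • ((-(‖z - y‖ ^ 3)⁻¹) • innerSL ℝ (z - y)) with hF'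
  have hnormF' : ∀ z y, ‖F' z y‖ = |ρ y| * ((‖z - y‖ ^ 3)⁻¹ * ‖z - y‖) := by
    intro z y
    show ‖ρ y • ((-(‖z - y‖ ^ 3)⁻¹) • innerSL ℝ (z - y))‖
      = |ρ y| * ((‖z - y‖ ^ 3)⁻¹ * ‖z - y‖)
    rw [norm_smul (ρ y) ((-(‖z - y‖ ^ 3)⁻¹) • innerSL ℝ (z - y)),
      norm_smul (-(‖z - y‖ ^ 3)⁻¹) (innerSL ℝ (z - y)), innerSL_apply_norm]
    simp [Real.norm_eq_abs, abs_neg, abs_inv, abs_pow, abs_norm]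
  have hboundF' : ∀ z ∈ Metric.ball x (R / 2), ∀ y,
      ‖F' z y‖ ≤ |ρ y| * ((R / 2) ^ 2)⁻¹ := by
    intro z hz y
    rw [hnormF']
    by_cases hρy : ρ y = 0
    · simp [hρy]
    · have hy := hsuppR y hρy
      have h1 : R / 2 ≤ ‖z - y‖ := hfar z hz y hy
      have h2 : (0:ℝ) < ‖z - y‖ := lt_of_lt_of_le (by linarith) h1
      have : (‖z - y‖ ^ 3)⁻¹ * ‖z - y‖ = (‖z - y‖ ^ 2)⁻¹ := by
        field_simp
      rw [this]
      exact mul_le_mul_of_nonneg_left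
        (inv_anti₀ (by positivity) (pow_le_pow_left₀ (by linarith) h1 2)) (abs_nonneg _)
  have measK : ∀ z : EuclideanSpace ℝ (Fin 3),
      Measurable fun y : EuclideanSpace ℝ (Fin 3) => ‖z - y‖ :=
    fun z => (continuous_const.sub continuous_id).norm.measurable
  have hFmeas : ∀ z : EuclideanSpace ℝ (Fin 3),
      AEStronglyMeasurable (fun y => ρ y / ‖z - y‖) volume := by
    intro z
    exact (ρc.measurable.div (measK z)).aestronglyMeasurable
  have hFint : Integrable (fun y => ρ y / ‖x - y‖) := by
    apply Integrable.mono' (ρint.abs.mul_const R⁻¹) (hFmeas x)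
    filter_upwards with y
    by_cases hρy : ρ y = 0
    · simp [hρy]
    · have hy := hsuppR y hρy
      have h1 : R ≤ ‖x - y‖ := by
        have := norm_sub_norm_le x y
        linarith
      have h2 : (0:ℝ) < ‖x - y‖ := lt_of_lt_of_le hR h1
      rw [Real.norm_eq_abs, abs_div, abs_norm]
      rw [div_eq_mul_inv]
      exact mul_le_mul_of_nonneg_left (inv_anti₀ hR h1) (abs_nonneg _)
  have hF'xmeas : AEStronglyMeasurable (F' x) volume := by
    have hre : F' x = fun y => (ρ y * (-(‖x - y‖ ^ 3)⁻¹)) • innerSL ℝ (x - y) := by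
      funext y
      simp only [hF']
      rw [smul_smul]
    rw [hre]
    apply AEStronglyMeasurable.fun_smul
    · exact (ρc.measurable.mul (((measK x).pow_const 3).inv.neg)).aestronglyMeasurable
    · exact ((innerSL ℝ (E := EuclideanSpace ℝ (Fin 3))).continuous.comp
        (continuous_const.sub continuous_id)).aestronglyMeasurable
  have boundInt : Integrable (fun y => |ρ y| * ((R / 2) ^ 2)⁻¹) :=
    ρint.abs.mul_const _
  have hxball : x ∈ Metric.ball x (R / 2) := Metric.mem_ball_self (by linarith)
  have hF'xint : Integrable (F' x) := by
    apply Integrable.mono' boundInt hF'xmeas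
    filter_upwards with y
    exact hboundF' x hxball y
  have hdiff : ∀ y : EuclideanSpace ℝ (Fin 3), ∀ z ∈ Metric.ball x (R / 2),
      HasFDerivAt (fun w => ρ y / ‖w - y‖) (F' z y) z := by
    intro y z hz
    by_cases hρy : ρ y = 0
    · simp only [hρy, zero_div, hF', zero_smul]
      exact hasFDerivAt_const 0 z
    · have hy := hsuppR y hρy
      have h1 : R / 2 ≤ ‖z - y‖ := hfar z hz y hy
      have hzy : z ≠ y := by
        intro h
        rw [h, sub_self, norm_zero] at h1
        linarith
      have := (hasFDerivAt_kernel y z hzy).const_mul (ρ y)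
      simpa only [div_eq_mul_inv, hF'] using this
  have hder : HasFDerivAt (fun z => ∫ y, ρ y / ‖z - y‖) (∫ y, F' x y) x := by
    apply hasFDerivAt_integral_of_dominated_of_fderiv_le
      (F' := F') (bound := fun y => |ρ y| * ((R / 2) ^ 2)⁻¹) (Metric.ball_mem_nhds x (half_pos hR))
    · exact Filter.Eventually.of_forall hFmeas
    · exact hFint
    · exact hF'xmeas
    · filter_upwards with y
      intro z hz
      exact hboundF' z hz y
    · exact boundInt
    · filter_upwards with y
      intro z hz
      exact hdiff y z hz
  have hD := hder.const_mul (1 / (4 * π))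
  rw [hD.fderiv]
  -- compute the applied derivative
  have happly : ((1 / (4 * π)) • ∫ y, F' x y) (EuclideanSpace.single i 1)
      = (1 / (4 * π)) * ∫ y, (F' x y) (EuclideanSpace.single i 1) := by
    rw [ContinuousLinearMap.smul_apply, ContinuousLinearMap.integral_apply hF'xint]
    simp
  have happint : Integrable (fun y => (F' x y) (EuclideanSpace.single i 1)) :=
    hF'xint.apply_continuousLinearMap _
  have hval : ∀ y, (F' x y) (EuclideanSpace.single i 1)
      = ρ y * (-((x - y) i * (‖x - y‖ ^ 3)⁻¹)) := by
    intro y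
    simp only [hF', ContinuousLinearMap.smul_apply, innerSL_apply_apply, smul_eq_mul]
    rw [real_inner_comm, EuclideanSpace.inner_single_left]
    simp only [starRingEnd_apply, star_trivial, one_mul]
    ring
  have hint1 : Integrable (fun y => ρ y * (-((x - y) i * (‖x - y‖ ^ 3)⁻¹))) := by
    have := happint
    simp_rw [hval] at this
    exact this
  have hint2 : Integrable (fun y => ρ y * (x i * (‖x‖ ^ 3)⁻¹)) := ρint.mul_const _
  have hsplit : ∫ y, ρ y * (x i * (‖x‖ ^ 3)⁻¹ - (x - y) i * (‖x - y‖ ^ 3)⁻¹)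
      = (∫ y, ρ y * (-((x - y) i * (‖x - y‖ ^ 3)⁻¹)))
        + ∫ y, ρ y * (x i * (‖x‖ ^ 3)⁻¹) := by
    rw [← integral_add hint1 hint2]
    congr 1
    funext y
    ring
  have hQi : ∫ y, ρ y * (x i * (‖x‖ ^ 3)⁻¹) = Q * (x i * (‖x‖ ^ 3)⁻¹) := by
    rw [hQ, ← integral_mul_const]
  rw [happly]
  have hvalint : ∫ y, (F' x y) (EuclideanSpace.single i 1)
      = ∫ y, ρ y * (-((x - y) i * (‖x - y‖ ^ 3)⁻¹)) := by
    congr 1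
    funext y
    exact hval y
  rw [hvalint]
  have heq : (1 / (4 * π)) * (∫ y, ρ y * (-((x - y) i * (‖x - y‖ ^ 3)⁻¹)))
      - (-(Q / (4 * π)) * x i / ‖x‖ ^ 3)
      = (1 / (4 * π)) * ∫ y, ρ y * (x i * (‖x‖ ^ 3)⁻¹ - (x - y) i * (‖x - y‖ ^ 3)⁻¹) := by
    rw [hsplit, hQi]
    have hxn : (‖x‖:ℝ) ≠ 0 := ne_of_gt hx0
    field_simp
    ring
  rw [heq]
  -- final bound
  have hgint : Integrable (fun y : EuclideanSpace ℝ (Fin 3)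
      => 32 * (‖x‖ ^ 3)⁻¹ * (‖y‖ * |ρ y|)) := Mint.const_mul _
  have hbnd : ‖∫ y, ρ y * (x i * (‖x‖ ^ 3)⁻¹ - (x - y) i * (‖x - y‖ ^ 3)⁻¹)‖
      ≤ ∫ y, 32 * (‖x‖ ^ 3)⁻¹ * (‖y‖ * |ρ y|) := by
    apply norm_integral_le_of_norm_le hgint
    filter_upwards with y
    by_cases hρy : ρ y = 0
    · simp [hρy]
    · have hy := hsuppR y hρy
      rw [Real.norm_eq_abs, abs_mul]
      have := est_main R hR x y hx hy i
      calc |ρ y| * |x i * (‖x‖ ^ 3)⁻¹ - (x - y) i * (‖x - y‖ ^ 3)⁻¹|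
          ≤ |ρ y| * (32 * (‖x‖ ^ 3)⁻¹ * ‖y‖) := by
            exact mul_le_mul_of_nonneg_left (by linarith [this]) (abs_nonneg _)
        _ = 32 * (‖x‖ ^ 3)⁻¹ * (‖y‖ * |ρ y|) := by ring
  have hM : ∫ y, 32 * (‖x‖ ^ 3)⁻¹ * (‖y‖ * |ρ y|) = 32 * (‖x‖ ^ 3)⁻¹ * M₁ := by
    rw [hM₁, ← integral_const_mul]
  rw [hM] at hbnd
  have hc : (0:ℝ) < 1 / (4 * π) := by positivity
  calc |(1 / (4 * π)) * ∫ y, ρ y * (x i * (‖x‖ ^ 3)⁻¹ - (x - y) i * (‖x - y‖ ^ 3)⁻¹)|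
      = (1 / (4 * π)) * |∫ y, ρ y * (x i * (‖x‖ ^ 3)⁻¹ - (x - y) i * (‖x - y‖ ^ 3)⁻¹)| := by
        rw [abs_mul, abs_of_pos hc]
    _ ≤ (1 / (4 * π)) * (32 * (‖x‖ ^ 3)⁻¹ * M₁) := by
        apply mul_le_mul_of_nonneg_left _ hc.le
        rw [← Real.norm_eq_abs]
        exact hbnd
    _ = (8 * M₁ / π) * (‖x‖ ^ 3)⁻¹ := by
        generalize (‖x‖ ^ 3)⁻¹ = a
        field_simp
        ring
end
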